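/- arXiv:1811.01162 — 3 statements merged into one kernel-verified Lean document; each statement's English description precedes it below -/
import Mathlib

section
/- Let H be a finite simple graph on n vertices with maximum degree at most 2, so every connected component of H is a simple path or a simple cycle. Let p_{3↓} (respectively, p_{4↑}) be the total number of vertices in the path components of H of order at most 3 (respectively, at least 4), let c_3 be the total number of vertices in components that are cycles of order exactly 3, and let c_{4,6↑} be the total number of vertices in components that are cycles of order exactly 4 or at least 6. Then ψ_4(H) ≤ (2/5)·n − (2/5)·(p_{3↓} + c_3) − (3/20)·p_{4↑} − (1/15)·c_{4,6↑}. -/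
open SimpleGraph

/-- `G` contains a path of order `k` (i.e., with `k` vertices). -/
def HasPathOfOrder {V : Type*} (G : SimpleGraph V) (k : ℕ) : Prop :=
  ∃ (u v : V) (w : G.Walk u v), w.IsPath ∧ w.length + 1 = k

/-- `F` is a `k`-path vertex cover of `G`: the subgraph induced on the
complement of `F` contains no path of order `k`. -/
def IsPathVertexCover {V : Type*} (G : SimpleGraph V) (k : ℕ) (F : Finset V) : Prop :=
  ¬ HasPathOfOrder (G.induce ((↑F : Set V)ᶜ)) k

/-- `psi G k` is the minimum cardinality of a `k`-path vertex cover of `G`. -/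
noncomputable def psi {V : Type*} [Fintype V] (G : SimpleGraph V) (k : ℕ) : ℕ :=
  sInf {n | ∃ F : Finset V, IsPathVertexCover G k F ∧ F.card = n}

/-!
Under maximum degree `2` every component is a path or, when it is `2`-regular, a cycle. Give a
component `K` the budget `0` if `|K| ≤ 3`, and otherwise `⌈|K|/4⌉` if it is a cycle and `⌊|K|/4⌋`
if it is a path; let `Φ(H)` be the total budget. By induction on the number of vertices, `H` has
a set of at most `Φ(H)` vertices meeting every path on four vertices: if a component contains such
a path, delete one vertex of it if it is a cycle, or the four vertices `u₁u₂u₃u₄` at one end if it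
is a path, and put the deleted vertex (resp. `u₄`) into the cover. Every path on four vertices
through a deleted vertex passes through the covered one, and `Φ` drops by at least one, since what
remains of the component consists of paths and `⌊a/4⌋ + ⌊b/4⌋ ≤ ⌊(a + b)/4⌋`. Finally the budget
of each component is at most the share of the bound carried by its vertices; for cycles this is
`⌈m/4⌉ ≤ m/3` when `m = 4` or `m ≥ 6`, and `2 ≤ 2` when `m = 5`.
-/

open Finset

lemma Finset.sum_nat_div_le {ι : Type*} (s : Finset ι) (f : ι → ℕ) (n : ℕ) :
    ∑ i ∈ s, f i / n ≤ (∑ i ∈ s, f i) / n := by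
  induction s using Finset.cons_induction with
  | empty => simp
  | cons a s ha ih =>
    rw [sum_cons, sum_cons]
    exact (Nat.add_le_add_left ih _).trans Nat.div_add_div_le_add_div

lemma Set.ncard_eq_sum_ite {α R : Type*} [Fintype α] [AddCommMonoidWithOne R] (s : Set α)
    [DecidablePred (· ∈ s)] : (s.ncard : R) = ∑ a, if a ∈ s then 1 else 0 := by
  rw [sum_boole, ← Set.ncard_coe_finset, coe_filter_univ, Set.ofPred_mem_eq]

lemma psi_le_card {V : Type*} [Fintype V] {G : SimpleGraph V} {k : ℕ} {F : Finset V}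
    (hF : IsPathVertexCover G k F) : psi G k ≤ F.card :=
  Nat.sInf_le ⟨F, hF, rfl⟩

namespace SimpleGraph

variable {V : Type*} {G : SimpleGraph V}

lemma Walk.forall_mem_support_of_adj_closed {T : Set V} {u v : V} (p : G.Walk u v)
    (hT : ∀ x ∈ T, ∀ y ∈ p.support, G.Adj x y → y ∈ T) :
    (∃ x ∈ p.support, x ∈ T) → ∀ y ∈ p.support, y ∈ T := by
  induction p with
  | nil => simp_all
  | @cons a b _ hab q ih =>
    rintro ⟨x, hx, hxT⟩
    have ih' := ih fun x hx y hy => hT x hx y (by simp [hy])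
    have hb : b ∈ q.support := q.start_mem_support
    have hqT : ∀ y ∈ q.support, y ∈ T := by
      by_cases haT : a ∈ T
      · exact ih' ⟨b, hb, hT a haT b (by simp) hab⟩
      · rw [Walk.support_cons, List.mem_cons] at hx
        rcases hx with rfl | hx
        · exact absurd hxT haT
        · exact ih' ⟨x, hx, hxT⟩
    intro y hy
    rw [Walk.support_cons, List.mem_cons] at hy
    rcases hy with rfl | hy
    · exact hT b (hqT b hb) y (by simp) hab.symm
    · exact hqT y hy

lemma Walk.IsPath.card_support_toFinset [DecidableEq V] {u v : V} {p : G.Walk u v}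
    (hp : p.IsPath) : p.support.toFinset.card = p.length + 1 := by
  rw [List.toFinset_card_of_nodup hp.support_nodup, Walk.length_support]

lemma Walk.IsPath.length_lt_ncard_supp [Finite V] {u v : V} {p : G.Walk u v} (hp : p.IsPath) :
    p.length < (G.connectedComponentMk u).supp.ncard := by
  classical
  have hsub : ↑p.support.toFinset ⊆ (G.connectedComponentMk u).supp := fun w hw =>
    (ConnectedComponent.sound ⟨p.takeUntil w (List.mem_toFinset.mp hw)⟩).symm
  have := Set.ncard_le_ncard hsub
  rw [Set.ncard_coe_finset, hp.card_support_toFinset] at this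
  omega

lemma ConnectedComponent.ncard_supp_eq_card_filter [Fintype V] (K : G.ConnectedComponent)
    [DecidablePred (G.connectedComponentMk · = K)] :
    K.supp.ncard = #{v | G.connectedComponentMk v = K} := by
  rw [← Set.ncard_coe_finset, coe_filter_univ]
  rfl

lemma ConnectedComponent.exists_adj_not_mem {K : G.ConnectedComponent} {T : Finset V}
    (hT : ↑T ⊆ K.supp) (hne : T.Nonempty) (hlt : T.card < K.supp.ncard) :
    ∃ x ∈ T, ∃ y ∉ T, G.Adj x y := by
  by_contra! h
  obtain ⟨t, ht⟩ := hne
  have hsupp : K.supp ⊆ T := by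
    intro u hu
    obtain ⟨p⟩ := ConnectedComponent.exact ((hT ht).trans hu.symm)
    refine p.forall_mem_support_of_adj_closed (T := T) (fun x hx y _ hxy => ?_)
      ⟨t, p.start_mem_support, ht⟩ u p.end_mem_support
    by_contra hy
    exact h x hx y hy hxy
  have := Set.ncard_le_ncard hsupp
  rw [Set.ncard_coe_finset] at this
  omega

lemma eq_of_adj_of_degree_le_one [Fintype V] [DecidableRel G.Adj] {v x y : V}
    (hv : G.degree v ≤ 1) (hx : G.Adj v x) (hy : G.Adj v y) : x = y := by
  classical
  by_contra hxy
  have := card_le_card (show ({x, y} : Finset V) ⊆ G.neighborFinset v by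
    simp [insert_subset_iff, hx, hy])
  rw [card_pair hxy, card_neighborFinset_eq_degree] at this
  omega

lemma eq_or_eq_of_adj_of_degree_le_two [Fintype V] [DecidableRel G.Adj] {v x y z : V}
    (hv : G.degree v ≤ 2) (hxy : x ≠ y) (hx : G.Adj v x) (hy : G.Adj v y) (hz : G.Adj v z) :
    z = x ∨ z = y := by
  classical
  by_contra! h
  have := card_le_card (show ({x, y, z} : Finset V) ⊆ G.neighborFinset v by
    simp [insert_subset_iff, hx, hy, hz])
  rw [card_eq_three.mpr ⟨x, y, z, hxy, h.1.symm, h.2.symm, rfl⟩,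
    card_neighborFinset_eq_degree] at this
  omega

def IsP4Cover (G : SimpleGraph V) (F : Finset V) : Prop :=
  ∀ ⦃u v : V⦄ (p : G.Walk u v), p.IsPath → p.length = 3 → ∃ x ∈ p.support, x ∈ F

def IsP4Gate (G : SimpleGraph V) (D : Finset V) (x : V) : Prop :=
  ∀ ⦃u v : V⦄ (p : G.Walk u v), p.IsPath → p.length = 3 → (∃ y ∈ p.support, y ∈ D) →
    x ∈ p.support

lemma IsP4Cover.isPathVertexCover {F : Finset V} (hF : G.IsP4Cover F) :
    IsPathVertexCover G 4 F := by
  rintro ⟨u, v, p, hp, hlen⟩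
  obtain ⟨x, hx, hxF⟩ := hF (p.map (Embedding.induce _).toHom)
    (hp.map Subtype.val_injective) (by rw [Walk.length_map]; omega)
  rw [Walk.support_map, List.mem_map] at hx
  obtain ⟨y, -, rfl⟩ := hx
  exact y.2 hxF

lemma IsP4Cover.insert_of_induce_compl [DecidableEq V] {D : Finset V} {x : V}
    (hx : G.IsP4Gate D x) {F : Finset ((D : Set V)ᶜ : Set V)}
    (hF : (G.induce (D : Set V)ᶜ).IsP4Cover F) :
    G.IsP4Cover (insert x (F.map (Function.Embedding.subtype _))) := by
  intro u v p hp hlen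
  by_cases hxp : x ∈ p.support
  · exact ⟨x, hxp, mem_insert_self _ _⟩
  have hpD : ∀ y ∈ p.support, y ∈ (D : Set V)ᶜ := fun y hy hyD => hxp (hx p hp hlen ⟨y, hy, hyD⟩)
  have hmap := p.map_induce hpD
  obtain ⟨y, hy, hyF⟩ := hF (p.induce _ hpD) (by rw [← hmap] at hp; exact hp.of_map)
    ((Walk.length_map _ _).symm.trans ((congrArg Walk.length hmap).trans hlen))
  refine ⟨y, ?_, mem_insert_of_mem (mem_map_of_mem _ hyF)⟩
  rw [Walk.support_induce] at hy
  exact (List.mem_attachWith _ _).mp hy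

lemma isP4Gate_singleton (x : V) : G.IsP4Gate {x} x := by
  rintro u v p - - ⟨y, hy, hyx⟩
  rwa [← mem_singleton.mp hyx]

lemma isP4Gate_insert [DecidableEq V] {T : Finset V} {x : V} (hT : T.card < 4)
    (hexit : ∀ t ∈ T, ∀ y, G.Adj t y → y ∈ T ∨ y = x) : G.IsP4Gate (insert x T) x := by
  rintro u v p hp hlen ⟨y, hy, hyD⟩
  by_contra hxp
  have hyT : y ∈ T := (mem_insert.mp hyD).resolve_left fun h => hxp (h ▸ hy)
  have hpT := p.forall_mem_support_of_adj_closed (T := T) (fun t ht z hz htz =>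
    (hexit t ht z htz).resolve_right fun h => hxp (h ▸ hz)) ⟨y, hy, hyT⟩
  have := card_le_card (s := p.support.toFinset) fun z hz => hpT z (List.mem_toFinset.mp hz)
  rw [hp.card_support_toFinset] at this
  omega

section induce

variable {s : Set V}

lemma reachable_induce_of_forall_reachable_mem {u v : s} (hs : ∀ w, G.Reachable u w → w ∈ s)
    (h : G.Reachable u v) : (G.induce s).Reachable u v := by
  classical
  obtain ⟨p⟩ := h
  exact ⟨p.induce s fun w hw => hs w ⟨p.takeUntil w hw⟩⟩

variable (G s) in
abbrev induceComponentMap : (G.induce s).ConnectedComponent → G.ConnectedComponent :=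
  ConnectedComponent.map (Embedding.induce s).toHom

@[simp]
lemma induceComponentMap_mk (v : s) :
    G.induceComponentMap s ((G.induce s).connectedComponentMk v) = G.connectedComponentMk v :=
  rfl

namespace ConnectedComponent

lemma image_val_supp_of_supp_subset {L : (G.induce s).ConnectedComponent}
    (hL : (G.induceComponentMap s L).supp ⊆ s) :
    Subtype.val '' L.supp = (G.induceComponentMap s L).supp := by
  induction L using ConnectedComponent.ind with | h v => ?_
  rw [induceComponentMap_mk] at hL ⊢
  ext u
  constructor
  · rintro ⟨w, hw, rfl⟩
    simpa using congrArg (G.induceComponentMap s) hw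
  · intro hu
    refine ⟨⟨u, hL hu⟩, ConnectedComponent.sound (reachable_induce_of_forall_reachable_mem
      (fun w hw => ?_) (ConnectedComponent.exact hu)), rfl⟩
    exact hL ((ConnectedComponent.sound hw).symm.trans hu)

lemma eq_of_induceComponentMap_eq {L L' : (G.induce s).ConnectedComponent}
    (h : G.induceComponentMap s L = G.induceComponentMap s L')
    (hL : (G.induceComponentMap s L).supp ⊆ s) : L = L' := by
  rw [← supp_inj, ← (Set.image_injective.mpr Subtype.val_injective).eq_iff,
    image_val_supp_of_supp_subset hL, image_val_supp_of_supp_subset (h ▸ hL), h]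

lemma neighborSet_subset_of_supp_subset {L : (G.induce s).ConnectedComponent}
    (hL : (G.induceComponentMap s L).supp ⊆ s) {v : s} (hv : v ∈ L.supp) :
    G.neighborSet v ⊆ s := fun y hy => hL <| by
  rw [mem_supp_iff, ← hv, induceComponentMap_mk]
  exact (connectedComponentMk_eq_of_adj hy).symm

lemma exists_neighborSet_not_subset {L : (G.induce s).ConnectedComponent}
    (hL : ¬ (G.induceComponentMap s L).supp ⊆ s) :
    ∃ v ∈ L.supp, ¬ G.neighborSet v ⊆ s := by
  by_contra! h
  induction L using ConnectedComponent.ind with | h v => ?_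
  refine hL fun u hu => ?_
  obtain ⟨p⟩ := ConnectedComponent.exact hu
  set T := Subtype.val '' ((G.induce s).connectedComponentMk v).supp
  have hT : ∀ x ∈ T, ∀ y ∈ p.support, G.Adj x y → y ∈ T := by
    rintro _ ⟨w, hw, rfl⟩ y - hwy
    exact ⟨⟨y, h w hw hwy⟩, (connectedComponentMk_eq_of_adj (induce_adj.2 hwy)).symm.trans hw, rfl⟩
  obtain ⟨w, -, rfl⟩ := p.forall_mem_support_of_adj_closed hT ⟨v, p.end_mem_support, v, rfl, rfl⟩ u
    p.start_mem_support
  exact w.2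

end ConnectedComponent

lemma degree_induce_lt_of_not_subset [Fintype V] [DecidableRel G.Adj] [DecidablePred (· ∈ s)]
    {v : s} (hv : ¬ G.neighborSet v ⊆ s) : (G.induce s).degree v < G.degree v := by
  classical
  rw [← card_neighborFinset_eq_degree, ← card_neighborFinset_eq_degree,
    ← card_map (Function.Embedding.subtype _), map_neighborFinset_induce]
  refine card_lt_card (Finset.ssubset_iff_subset_ne.mpr ⟨inter_subset_left, fun h => hv ?_⟩)
  intro y hy
  have : y ∈ G.neighborFinset v ∩ s.toFinset := by
    rw [h]
    exact (mem_neighborFinset _ _ _).mpr hy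
  simpa using (mem_inter.mp this).2

end induce

section potential

variable [Fintype V] [DecidableRel G.Adj]

namespace ConnectedComponent

def IsTwoRegular (K : G.ConnectedComponent) : Prop :=
  ∀ v ∈ K.supp, G.degree v = 2

open scoped Classical in
noncomputable def p4Budget (K : G.ConnectedComponent) : ℕ :=
  if K.supp.ncard ≤ 3 then 0
  else if K.IsTwoRegular then (K.supp.ncard + 3) / 4 else K.supp.ncard / 4

lemma p4Budget_le_of_not_isTwoRegular {K : G.ConnectedComponent} (hK : ¬ K.IsTwoRegular) :
    K.p4Budget ≤ K.supp.ncard / 4 := by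
  unfold p4Budget
  split_ifs <;> omega

end ConnectedComponent

variable (G) in
noncomputable def p4Potential [Fintype G.ConnectedComponent] : ℕ :=
  ∑ K : G.ConnectedComponent, K.p4Budget

omit [DecidableRel G.Adj] in
lemma sum_ncard_supp_filter (P : G.ConnectedComponent → Prop) [DecidablePred P]
    [Fintype G.ConnectedComponent] :
    ∑ K with P K, K.supp.ncard = {v | P (G.connectedComponentMk v)}.ncard := by
  classical
  rw [sum_congr rfl fun K _ => K.ncard_supp_eq_card_filter]
  refine (sum_card_fiberwise_eq_card_filter _ _ _).trans ?_
  rw [← Set.ncard_coe_finset]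
  simp

open scoped Classical

variable {s : Set V} [DecidablePred (· ∈ s)]

lemma ConnectedComponent.p4Budget_induce_eq {L : (G.induce s).ConnectedComponent}
    (hL : (G.induceComponentMap s L).supp ⊆ s) :
    L.p4Budget = (G.induceComponentMap s L).p4Budget := by
  have hcard : L.supp.ncard = (G.induceComponentMap s L).supp.ncard := by
    rw [← image_val_supp_of_supp_subset hL, Set.ncard_image_of_injective _ Subtype.val_injective]
  have hreg : L.IsTwoRegular ↔ (G.induceComponentMap s L).IsTwoRegular := by
    rw [IsTwoRegular, IsTwoRegular, ← image_val_supp_of_supp_subset hL, Set.forall_mem_image]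
    refine forall₂_congr fun v hv => ?_
    rw [degree_induce_of_neighborSet_subset (neighborSet_subset_of_supp_subset hL hv)]
  unfold p4Budget
  rw [hcard]
  by_cases h : L.IsTwoRegular
  · rw [if_pos h, if_pos (hreg.mp h)]
  · rw [if_neg h, if_neg (mt hreg.mpr h)]

variable [DecidableEq V]

lemma sum_p4Budget_fiber_of_supp_subset {K : G.ConnectedComponent} (hK : K.supp ⊆ s) :
    ∑ L with G.induceComponentMap s L = K, L.p4Budget = K.p4Budget := by
  induction K using ConnectedComponent.ind with | h v => ?_
  set L₀ := (G.induce s).connectedComponentMk ⟨v, hK rfl⟩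
  have hL₀ : G.induceComponentMap s L₀ = G.connectedComponentMk v := induceComponentMap_mk _
  have hfiber (L) (hL : L ≠ L₀) : G.induceComponentMap s L ≠ G.connectedComponentMk v :=
    fun h => hL (ConnectedComponent.eq_of_induceComponentMap_eq (h.trans hL₀.symm) (by rwa [h]))
  rw [sum_filter, Fintype.sum_eq_single L₀ fun L hL => if_neg (hfiber L hL), if_pos hL₀,
    ConnectedComponent.p4Budget_induce_eq (hL₀ ▸ hK), hL₀]

lemma sum_p4Budget_fiber_le (hdeg : ∀ v, G.degree v ≤ 2) {K : G.ConnectedComponent}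
    {D : Finset V} (hD : D.Nonempty) (hDK : ↑D ⊆ K.supp) :
    ∑ L with G.induceComponentMap (↑D)ᶜ L = K, L.p4Budget ≤ (K.supp.ncard - D.card) / 4 := by
  have hpiece (L) (hL : G.induceComponentMap (↑D)ᶜ L = K) : ¬ L.IsTwoRegular := by
    intro hreg
    obtain ⟨d, hd⟩ := hD
    obtain ⟨v, hv, hvD⟩ := ConnectedComponent.exists_neighborSet_not_subset (L := L)
      (by rw [hL]; exact fun h => h (hDK hd) hd)
    have := degree_induce_lt_of_not_subset hvD
    have := hdeg v
    have := hreg v hv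
    omega
  have hcard : {v | G.induceComponentMap (↑D)ᶜ ((G.induce (↑D)ᶜ).connectedComponentMk v) = K}.ncard
      = K.supp.ncard - D.card := by
    have : {v | G.induceComponentMap (↑D)ᶜ ((G.induce (↑D)ᶜ).connectedComponentMk v) = K}
        = Subtype.val ⁻¹' (K.supp \ ↑D) := by
      ext v
      simp
    rw [this, Set.ncard_preimage_of_injective_subset_range Subtype.val_injective
      fun x hx => ⟨⟨x, hx.2⟩, rfl⟩, Set.ncard_sdiff hDK, Set.ncard_coe_finset]
  calc ∑ L with G.induceComponentMap (↑D)ᶜ L = K, L.p4Budget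
      ≤ ∑ L with G.induceComponentMap (↑D)ᶜ L = K, L.supp.ncard / 4 := sum_le_sum fun L hL =>
        ConnectedComponent.p4Budget_le_of_not_isTwoRegular (hpiece L (mem_filter.mp hL).2)
    _ ≤ (∑ L with G.induceComponentMap (↑D)ᶜ L = K, L.supp.ncard) / 4 := sum_nat_div_le _ _ _
    _ = (K.supp.ncard - D.card) / 4 := by rw [sum_ncard_supp_filter, hcard]

lemma p4Potential_induce_compl_add_le (hdeg : ∀ v, G.degree v ≤ 2) {K : G.ConnectedComponent}
    {D : Finset V} (hD : D.Nonempty) (hDK : ↑D ⊆ K.supp) :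
    (G.induce (↑D)ᶜ).p4Potential + K.p4Budget ≤ G.p4Potential + (K.supp.ncard - D.card) / 4 := by
  have hrest : ∀ K' ∈ univ.erase K,
      ∑ L with G.induceComponentMap (↑D)ᶜ L = K', L.p4Budget = K'.p4Budget := by
    refine fun K' hK' => sum_p4Budget_fiber_of_supp_subset fun v hv hvD => ?_
    exact (mem_erase.mp hK').1 (hv.symm.trans (hDK hvD))
  have hG' : (G.induce (↑D)ᶜ).p4Potential = ∑ L with G.induceComponentMap (↑D)ᶜ L = K,
      L.p4Budget + ∑ K' ∈ univ.erase K, K'.p4Budget := by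
    rw [p4Potential, ← sum_fiberwise univ (G.induceComponentMap (↑D)ᶜ),
      ← add_sum_erase univ _ (mem_univ K), sum_congr rfl hrest]
  have hG : G.p4Potential = K.p4Budget + ∑ K' ∈ univ.erase K, K'.p4Budget :=
    (add_sum_erase univ _ (mem_univ K)).symm
  have hK := sum_p4Budget_fiber_le hdeg hD hDK
  omega

end potential

section cover

variable [Fintype V] [DecidableRel G.Adj]

-- `T` is the initial segment with `k` vertices of the path component read from its end `u`,
-- and `x` is the next vertex.
lemma ConnectedComponent.exists_finset_unique_exit (hdeg : ∀ v, G.degree v ≤ 2)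
    {K : G.ConnectedComponent} {u : V} (hu : u ∈ K.supp) (hu1 : G.degree u ≤ 1) :
    ∀ k < K.supp.ncard, ∃ T : Finset V, ∃ x, T.card = k ∧ ↑T ⊆ K.supp ∧ x ∈ K.supp ∧ x ∉ T ∧
      (∀ t ∈ T, ∀ y, G.Adj t y → y ∈ T ∨ y = x) ∧
      (∀ y z, G.Adj x y → G.Adj x z → y ∉ T → z ∉ T → y = z) := by
  classical
  intro k
  induction k with
  | zero =>
    exact fun _ => ⟨∅, u, rfl, by simp, hu, notMem_empty u, by simp,
      fun y z hy hz _ _ => eq_of_adj_of_degree_le_one hu1 hy hz⟩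
  | succ k ih =>
    intro hk
    obtain ⟨T, x, hTk, hTK, hxK, hxT, hexit, huniq⟩ := ih (by omega)
    have hT'K : ↑(insert x T) ⊆ K.supp := by
      rw [coe_insert]
      exact Set.insert_subset hxK hTK
    obtain ⟨t, ht, y, hyT, hty⟩ := exists_adj_not_mem hT'K (insert_nonempty x T)
      (by rw [card_insert_of_notMem hxT]; omega)
    obtain rfl : t = x := by
      rcases mem_insert.mp ht with rfl | ht
      · rfl
      · rcases hexit t ht y hty with hy | rfl
        · exact absurd (mem_insert_of_mem hy) hyT
        · exact absurd (mem_insert_self _ T) hyT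
    refine ⟨insert t T, y, by rw [card_insert_of_notMem hxT, hTk], hT'K,
      (connectedComponentMk_eq_of_adj hty).symm.trans hxK, hyT, ?_, ?_⟩
    · intro s hs z hsz
      rcases mem_insert.mp hs with rfl | hs
      · by_cases hzT : z ∈ T
        · exact Or.inl (mem_insert_of_mem hzT)
        · exact Or.inr (huniq z y hsz hty hzT fun h => hyT (mem_insert_of_mem h))
      · rcases hexit s hs z hsz with hz | rfl
        · exact Or.inl (mem_insert_of_mem hz)
        · exact Or.inl (mem_insert_self _ T)
    · intro a b ha hb haT hbT
      have hta : t ≠ a := fun h => haT (h ▸ mem_insert_self _ T)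
      rcases eq_or_eq_of_adj_of_degree_le_two (hdeg y) hta hty.symm ha hb with rfl | rfl
      · exact absurd (mem_insert_self _ T) hbT
      · rfl

variable [DecidableEq V]

lemma exists_isP4Gate_p4Potential_induce_compl_lt (hdeg : ∀ v, G.degree v ≤ 2) {u v : V}
    {p : G.Walk u v} (hp : p.IsPath) (hlen : p.length = 3) :
    ∃ D : Finset V, ∃ x ∈ D, G.IsP4Gate D x ∧ (G.induce (↑D)ᶜ).p4Potential < G.p4Potential := by
  set K := G.connectedComponentMk u
  have hK4 : 4 ≤ K.supp.ncard := by
    have := hp.length_lt_ncard_supp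
    rw [hlen] at this
    exact this
  by_cases hreg : K.IsTwoRegular
  · refine ⟨{u}, u, mem_singleton_self u, isP4Gate_singleton u, ?_⟩
    have hbudget : K.p4Budget = (K.supp.ncard + 3) / 4 := by
      rw [ConnectedComponent.p4Budget, if_neg (by omega), if_pos hreg]
    have := p4Potential_induce_compl_add_le hdeg (singleton_nonempty u)
      (by simp [K] : (↑({u} : Finset V) : Set V) ⊆ K.supp)
    rw [hbudget, card_singleton] at this
    omega
  · obtain ⟨w, hwK, hw⟩ : ∃ w ∈ K.supp, G.degree w ≤ 1 := by
      simp only [ConnectedComponent.IsTwoRegular, not_forall] at hreg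
      obtain ⟨w, hwK, hw⟩ := hreg
      exact ⟨w, hwK, by have := hdeg w; omega⟩
    obtain ⟨T, x, hT3, hTK, hxK, hxT, hexit, -⟩ :=
      ConnectedComponent.exists_finset_unique_exit hdeg hwK hw 3 (by omega)
    refine ⟨insert x T, x, mem_insert_self x T, isP4Gate_insert (by omega) hexit, ?_⟩
    have hbudget : K.p4Budget = K.supp.ncard / 4 := by
      rw [ConnectedComponent.p4Budget, if_neg (by omega), if_neg hreg]
    have := p4Potential_induce_compl_add_le hdeg (insert_nonempty x T)
      (by rw [coe_insert]; exact Set.insert_subset hxK hTK)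
    rw [hbudget, card_insert_of_notMem hxT] at this
    omega

theorem exists_isP4Cover_card_le_p4Potential (hdeg : ∀ v, G.degree v ≤ 2) :
    ∃ F : Finset V, G.IsP4Cover F ∧ F.card ≤ G.p4Potential := by
  induction hn : Fintype.card V using Nat.strong_induction_on generalizing V with
  | _ n ih =>
  by_cases hP : ∃ u v : V, ∃ p : G.Walk u v, p.IsPath ∧ p.length = 3
  · obtain ⟨u, v, p, hp, hlen⟩ := hP
    obtain ⟨D, x, hxD, hx, hlt⟩ := exists_isP4Gate_p4Potential_induce_compl_lt hdeg hp hlen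
    have hcard : Fintype.card ((↑D : Set V)ᶜ : Set V) < n :=
      hn ▸ Fintype.card_subtype_lt (x := x) (by simpa using hxD)
    obtain ⟨F, hF, hFcard⟩ := ih _ hcard
      (fun w => ((Embedding.induce _).toCopy.degree_le w).trans (hdeg w)) rfl
    refine ⟨_, hF.insert_of_induce_compl hx, ?_⟩
    have := card_insert_le x (F.map (Function.Embedding.subtype _))
    rw [card_map] at this
    omega
  · exact ⟨∅, fun u v p hp hlen => absurd ⟨u, v, p, hp, hlen⟩ hP, by simp⟩

end cover

section weight

variable [Fintype V] [DecidableRel G.Adj]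

-- The share of the bound in the theorem carried by each vertex of `K`.
open scoped Classical in
noncomputable def ConnectedComponent.p4Weight (K : G.ConnectedComponent) : ℝ :=
  2 / 5 - 2 / 5 * ((if (∃ u ∈ K.supp, G.degree u ≤ 1) ∧ K.supp.ncard ≤ 3 then 1 else 0)
      + (if K.IsTwoRegular ∧ K.supp.ncard = 3 then 1 else 0))
    - 3 / 20 * (if (∃ u ∈ K.supp, G.degree u ≤ 1) ∧ 4 ≤ K.supp.ncard then 1 else 0)
    - 1 / 15 * (if K.IsTwoRegular ∧ (K.supp.ncard = 4 ∨ 6 ≤ K.supp.ncard) then 1 else 0)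

lemma ConnectedComponent.p4Budget_le_ncard_mul_p4Weight (hdeg : ∀ v, G.degree v ≤ 2)
    (K : G.ConnectedComponent) : (K.p4Budget : ℝ) ≤ K.supp.ncard * K.p4Weight := by
  have hpath : (∃ u ∈ K.supp, G.degree u ≤ 1) ↔ ¬ K.IsTwoRegular := by
    simp only [IsTwoRegular, not_forall, exists_prop]
    exact exists_congr fun u => and_congr_right fun _ => by have := hdeg u; omega
  unfold p4Weight p4Budget
  by_cases hreg : K.IsTwoRegular
  · have hnp : ¬ ∃ u ∈ K.supp, G.degree u ≤ 1 := fun h => hpath.mp h hreg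
    simp only [hreg, hnp, false_and, true_and, if_false, if_true]
    generalize K.supp.ncard = m
    rcases Nat.lt_or_ge m 9 with h | h
    · interval_cases m <;> norm_num
    · rw [if_neg (by omega), if_neg (by omega), if_pos (Or.inr (by omega))]
      have := Nat.cast_div_le (α := ℝ) (m := m + 3) (n := 4)
      have : (9 : ℝ) ≤ m := by exact_mod_cast h
      push_cast at *
      linarith
  · simp only [hreg, hpath.mpr hreg, false_and, true_and, if_false]
    generalize K.supp.ncard = m
    rcases Nat.lt_or_ge m 4 with h | h
    · rw [if_pos (by omega), if_pos (by omega), if_neg (by omega)]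
      norm_num
    · rw [if_neg (by omega), if_neg (by omega), if_pos h]
      have := Nat.cast_div_le (α := ℝ) (m := m) (n := 4)
      push_cast at *
      linarith

lemma p4Potential_le_sum_p4Weight [DecidableEq V] (hdeg : ∀ v, G.degree v ≤ 2) :
    (G.p4Potential : ℝ) ≤ ∑ v, (G.connectedComponentMk v).p4Weight := by
  classical
  calc (G.p4Potential : ℝ) = ∑ K : G.ConnectedComponent, (K.p4Budget : ℝ) := by
        rw [p4Potential, Nat.cast_sum]
    _ ≤ ∑ K : G.ConnectedComponent, K.supp.ncard * K.p4Weight :=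
        sum_le_sum fun K _ => K.p4Budget_le_ncard_mul_p4Weight hdeg
    _ = ∑ v, (G.connectedComponentMk v).p4Weight := by
        rw [← sum_fiberwise' univ G.connectedComponentMk]
        refine sum_congr rfl fun K _ => ?_
        rw [sum_const, nsmul_eq_mul, K.ncard_supp_eq_card_filter]

end weight

end SimpleGraph

/-- For a graph `H` of maximum degree at most `2` (so each component is a
path or a cycle; a component is a cycle iff all its vertices have degree `2`):
`ψ₄(H) ≤ (2/5)n - (2/5)(p₃↓ + c₃) - (3/20)p₄↑ - (1/15)c₄,₆↑`, where `p₃↓`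
(resp. `p₄↑`) is the number of vertices in path components of order at most
`3` (resp. at least `4`), `c₃` the number of vertices in `3`-cycle
components, and `c₄,₆↑` the number of vertices in cycle components of order
exactly `4` or at least `6`. -/
theorem stmt_15 {W : Type*} [Fintype W] (H : SimpleGraph W) [DecidableRel H.Adj]
    (hdeg : ∀ v, H.degree v ≤ 2)
    (p3 p4 c3 c46 : ℕ)
    (hp3 : p3 = Set.ncard {v : W |
      (∃ u, H.connectedComponentMk u = H.connectedComponentMk v ∧ H.degree u ≤ 1) ∧
      Set.ncard {u | H.connectedComponentMk u = H.connectedComponentMk v} ≤ 3})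
    (hp4 : p4 = Set.ncard {v : W |
      (∃ u, H.connectedComponentMk u = H.connectedComponentMk v ∧ H.degree u ≤ 1) ∧
      4 ≤ Set.ncard {u | H.connectedComponentMk u = H.connectedComponentMk v}})
    (hc3 : c3 = Set.ncard {v : W |
      (∀ u, H.connectedComponentMk u = H.connectedComponentMk v → H.degree u = 2) ∧
      Set.ncard {u | H.connectedComponentMk u = H.connectedComponentMk v} = 3})
    (hc46 : c46 = Set.ncard {v : W |
      (∀ u, H.connectedComponentMk u = H.connectedComponentMk v → H.degree u = 2) ∧
      (Set.ncard {u | H.connectedComponentMk u = H.connectedComponentMk v} = 4 ∨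
        6 ≤ Set.ncard {u | H.connectedComponentMk u = H.connectedComponentMk v})}) :
    (psi H 4 : ℝ) ≤ 2 / 5 * Fintype.card W - 2 / 5 * ((p3 : ℝ) + c3)
      - 3 / 20 * p4 - 1 / 15 * c46 := by
  classical
  obtain ⟨F, hF, hFcard⟩ := H.exists_isP4Cover_card_le_p4Potential hdeg
  calc (psi H 4 : ℝ) ≤ H.p4Potential := by
        exact_mod_cast (psi_le_card hF.isPathVertexCover).trans hFcard
    _ ≤ ∑ v, (H.connectedComponentMk v).p4Weight := H.p4Potential_le_sum_p4Weight hdeg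
    _ = _ := by
        rw [hp3, hp4, hc3, hc46, Set.ncard_eq_sum_ite, Set.ncard_eq_sum_ite, Set.ncard_eq_sum_ite,
          Set.ncard_eq_sum_ite, ← card_univ, card_eq_sum_ones, Nat.cast_sum]
        simp only [mul_sum, ← sum_add_distrib, ← sum_sub_distrib]
        refine sum_congr rfl fun v _ => ?_
        simp only [ConnectedComponent.p4Weight, ConnectedComponent.IsTwoRegular,
          ConnectedComponent.supp, Set.mem_ofPred_eq, Nat.cast_one, mul_one]
        congr
end

section
/- Let d ≥ 3 and let G = (V, E) be a d-regular finite simple bipartite graph with bipartition (A, B). Let A_1 ⊆ A be such that distinct vertices of A_1 have disjoint neighborhoods, and suppose that every vertex of A ∖ A_1 has at least one neighbor in N(A_1) = ⋃_{a ∈ A_1} N(a). Then A ∖ A_1 is a 4-path vertex cover of G satisfying |A ∖ A_1| ≤ ((d² − d)/(2(d² − d + 1)))·|V| and |A ∖ A_1| ≤ (d²/(d² − d + 1))·ψ_4(G). -/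
open SimpleGraph

/-!
Two vertices of `A₁` never share a neighbour, so in the graph induced on `A₁ ∪ B` every vertex
of `B` has degree at most one; since a path on four vertices of a bipartite graph contains a
subpath `A – B – A`, removing `A ∖ A₁` destroys all 4-paths. Every vertex of `A ∖ A₁` has a
neighbour in `N(A₁)`, and every vertex of `N(A₁)` has at most `d - 1` neighbours in `A ∖ A₁`, so
`|A ∖ A₁| ≤ d(d - 1)|A₁|`; with `|A| = |V|/2` this gives the first bound.

For the second bound, `ψ₄(G) ≥ (d - 1)|V|/(2d)` holds in every triangle-free `d`-regular graph:
outside a 4-path vertex cover `F`, every edge has an endpoint `u` with at most one neighbour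
outside `F`. The set `L` of such vertices carries at least half of the degree sum of `G - F`,
each vertex of `L` sends at least `d - 1` edges into `F`, and `F` receives at most `d|F|` edges.
-/

open Finset

namespace SimpleGraph

variable {V : Type*} {G : SimpleGraph V}

theorem hasPathOfOrder_four_iff :
    HasPathOfOrder G 4 ↔
      ∃ w x y z, G.Adj w x ∧ G.Adj x y ∧ G.Adj y z ∧ w ≠ y ∧ x ≠ z ∧ w ≠ z := by
  constructor
  · rintro ⟨_, _, p, hp, hlen⟩
    rcases p with _ | ⟨hwx, _ | ⟨hxy, _ | ⟨hyz, _ | ⟨_, _⟩⟩⟩⟩ <;> simp at hlen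
    simp only [Walk.isPath_def, Walk.support_cons, Walk.support_nil, List.nodup_cons,
      List.mem_cons, List.not_mem_nil] at hp
    exact ⟨_, _, _, _, hwx, hxy, hyz, by tauto, by tauto, by tauto⟩
  · rintro ⟨w, x, y, z, hwx, hxy, hyz, hwy, hxz, hwz⟩
    exact ⟨w, z, .cons hwx (.cons hxy (.cons hyz .nil)),
      by simp [Walk.isPath_def, hwx.ne, hxy.ne, hyz.ne, hwy, hxz, hwz], rfl⟩

theorem isPathVertexCover_four_iff {F : Finset V} :
    IsPathVertexCover G 4 F ↔ ¬ ∃ w x y z, w ∉ F ∧ x ∉ F ∧ y ∉ F ∧ z ∉ F ∧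
      G.Adj w x ∧ G.Adj x y ∧ G.Adj y z ∧ w ≠ y ∧ x ≠ z ∧ w ≠ z := by
  simp only [IsPathVertexCover, hasPathOfOrder_four_iff, Subtype.exists, comap_adj,
    Function.Embedding.subtype_apply, ne_eq, Subtype.mk.injEq, Set.mem_compl_iff, mem_coe]
  grind

theorem IsBipartiteWith.isPathVertexCover_four_sdiff [DecidableEq V] {A B A₁ : Finset V}
    (hG : G.IsBipartiteWith A B)
    (hA₁ : ∀ a ∈ A₁, ∀ a' ∈ A₁, a ≠ a' → ∀ b, G.Adj a b → ¬G.Adj a' b) :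
    IsPathVertexCover G 4 (A \ A₁) := by
  have mem_A₁ : ∀ v ∉ A \ A₁, v ∈ A → v ∈ A₁ := fun v hv hvA => by simpa [hvA] using hv
  rw [isPathVertexCover_four_iff]
  rintro ⟨w, x, y, z, hw, hx, hy, hz, hwx, hxy, hyz, hwy, hxz, -⟩
  rcases hG.mem_of_adj hwx with ⟨hwA, hxB⟩ | ⟨hwB, hxA⟩
  · have hyA : y ∈ A := hG.mem_of_mem_adj' hxB hxy.symm
    exact hA₁ w (mem_A₁ w hw hwA) y (mem_A₁ y hy hyA) hwy x hwx hxy.symm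
  · have hyB : y ∈ B := hG.mem_of_mem_adj hxA hxy
    have hzA : z ∈ A := hG.mem_of_mem_adj' hyB hyz.symm
    exact hA₁ x (mem_A₁ x hx hxA) z (mem_A₁ z hz hzA) hxz y hxy hyz.symm

variable (G) in
theorem exists_isPathVertexCover_card_eq_psi [Fintype V] (k : ℕ) :
    ∃ F : Finset V, IsPathVertexCover G k F ∧ #F = psi G k :=
  Nat.sInf_mem (s := {n | ∃ F : Finset V, IsPathVertexCover G k F ∧ #F = n})
    ⟨_, univ, fun ⟨u, _, _, _⟩ => by simpa using u.2, rfl⟩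

section Counting

variable [Fintype V] [DecidableEq V] [DecidableRel G.Adj]

theorem sum_card_neighborFinset_inter_comm (S T : Finset V) :
    ∑ u ∈ S, #(G.neighborFinset u ∩ T) = ∑ v ∈ T, #(G.neighborFinset v ∩ S) := by
  convert sum_card_bipartiteAbove_eq_sum_card_bipartiteBelow G.Adj using 3 <;> ext <;>
    simp [bipartiteAbove, bipartiteBelow, adj_comm, and_comm]

theorem IsRegularOfDegree.card_le_mul_card_of_forall_exists_adj_adj {d : ℕ}
    (hG : G.IsRegularOfDegree d) {S T : Finset V} (hST : Disjoint S T)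
    (hS : ∀ v ∈ S, ∃ w, G.Adj v w ∧ ∃ a ∈ T, G.Adj a w) :
    #S ≤ d * (d - 1) * #T := by
  set N := T.biUnion fun a => G.neighborFinset a
  have hN : #N ≤ d * #T := by
    calc #N ≤ ∑ a ∈ T, #(G.neighborFinset a) := card_biUnion_le
      _ = d * #T := by simp [hG.degree_eq, mul_comm]
  have hdouble : #S * 1 ≤ #N * (d - 1) := by
    refine card_mul_le_card_mul G.Adj (fun v hv => ?_) (fun w hw => ?_)
    · obtain ⟨w, hvw, a, ha, haw⟩ := hS v hv
      exact card_pos.mpr ⟨w, (mem_bipartiteAbove _).mpr ⟨mem_biUnion.mpr ⟨a, ha, by simpa⟩, hvw⟩⟩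
    · obtain ⟨a, ha, haw⟩ := mem_biUnion.mp hw
      have hsub : S.bipartiteBelow G.Adj w ⊆ (G.neighborFinset w).erase a := fun v hv => by
        obtain ⟨hvS, hvw⟩ := (mem_bipartiteBelow _).mp hv
        exact mem_erase.mpr
          ⟨fun h => Finset.disjoint_left.mp hST hvS (h ▸ ha), by simpa using hvw.symm⟩
      calc #(S.bipartiteBelow G.Adj w) ≤ #((G.neighborFinset w).erase a) := card_le_card hsub
        _ = d - 1 := by
          rw [card_erase_of_mem (by simpa [adj_comm] using haw),
            card_neighborFinset_eq_degree, hG.degree_eq]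
  calc #S = #S * 1 := (mul_one _).symm
    _ ≤ #N * (d - 1) := hdouble
    _ ≤ d * #T * (d - 1) := Nat.mul_le_mul_right _ hN
    _ = d * (d - 1) * #T := by ring

theorem IsPathVertexCover.card_neighborFinset_inter_compl_le_one_or {F : Finset V}
    (hF : IsPathVertexCover G 4 F) (hG : G.CliqueFree 3) {u v : V} (hu : u ∈ Fᶜ) (hv : v ∈ Fᶜ)
    (huv : G.Adj u v) :
    #(G.neighborFinset u ∩ Fᶜ) ≤ 1 ∨ #(G.neighborFinset v ∩ Fᶜ) ≤ 1 := by
  by_contra! h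
  obtain ⟨u', hu', hu'v⟩ := exists_mem_ne h.1 v
  obtain ⟨v', hv', hv'u⟩ := exists_mem_ne h.2 u
  simp only [mem_inter, mem_neighborFinset, mem_compl] at hu' hv' hu hv
  have hu'v' : u' ≠ v' := by
    rintro rfl
    exact hG {u, v, u'} (is3Clique_triple_iff.mpr ⟨huv, hu'.1, hv'.1⟩)
  exact isPathVertexCover_four_iff.mp hF
    ⟨u', u, v, v', hu'.2, hu, hv, hv'.2, hu'.1.symm, huv, hv'.1, hu'v, hv'u.symm, hu'v'⟩

theorem sum_card_neighborFinset_inter_le_two_mul_card (C : Finset V)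
    (hC : ∀ u ∈ C, ∀ v ∈ C, G.Adj u v →
      #(G.neighborFinset u ∩ C) ≤ 1 ∨ #(G.neighborFinset v ∩ C) ≤ 1) :
    ∑ u ∈ C, #(G.neighborFinset u ∩ C) ≤ 2 * #{u ∈ C | #(G.neighborFinset u ∩ C) ≤ 1} := by
  set L := {u ∈ C | #(G.neighborFinset u ∩ C) ≤ 1}
  have hL : L ⊆ C := filter_subset _ _
  have hsumL : ∑ u ∈ L, #(G.neighborFinset u ∩ C) ≤ #L := by
    simpa using sum_le_card_nsmul L _ 1 fun u hu => (mem_filter.mp hu).2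
  have hneighbors_mem_L : ∀ u ∈ C \ L, G.neighborFinset u ∩ C = G.neighborFinset u ∩ L := by
    intro u hu
    obtain ⟨huC, huL⟩ := mem_sdiff.mp hu
    ext v
    simp only [mem_inter, mem_neighborFinset]
    refine ⟨fun ⟨huv, hvC⟩ => ⟨huv, mem_filter.mpr ⟨hvC, ?_⟩⟩, fun ⟨huv, hvL⟩ => ⟨huv, hL hvL⟩⟩
    exact (hC u huC v hvC huv).resolve_left fun h => huL (mem_filter.mpr ⟨huC, h⟩)
  have hsum_rest : ∑ u ∈ C \ L, #(G.neighborFinset u ∩ C) ≤ #L :=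
    calc ∑ u ∈ C \ L, #(G.neighborFinset u ∩ C)
        = ∑ u ∈ C \ L, #(G.neighborFinset u ∩ L) :=
          sum_congr rfl fun u hu => by rw [hneighbors_mem_L u hu]
      _ = ∑ v ∈ L, #(G.neighborFinset v ∩ (C \ L)) := sum_card_neighborFinset_inter_comm _ _
      _ ≤ ∑ v ∈ L, #(G.neighborFinset v ∩ C) :=
          sum_le_sum fun v _ => card_le_card (by gcongr; exact sdiff_subset)
      _ ≤ #L := hsumL
  rw [← sum_sdiff hL]
  omega

theorem IsRegularOfDegree.sub_one_mul_card_compl_le {d : ℕ} (hG : G.IsRegularOfDegree d)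
    (F : Finset V) (hF : ∀ u ∈ Fᶜ, ∀ v ∈ Fᶜ, G.Adj u v →
      #(G.neighborFinset u ∩ Fᶜ) ≤ 1 ∨ #(G.neighborFinset v ∩ Fᶜ) ≤ 1) :
    (d - 1) * #Fᶜ ≤ (d + 1) * #F := by
  set C := Fᶜ
  set L := {u ∈ C | #(G.neighborFinset u ∩ C) ≤ 1}
  set X := ∑ u ∈ C, #(G.neighborFinset u ∩ C)
  set Y := ∑ u ∈ C, #(G.neighborFinset u ∩ F)
  have hsplit (u : V) : #(G.neighborFinset u ∩ C) + #(G.neighborFinset u ∩ F) = d := by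
    rw [← sdiff_eq_inter_compl, card_sdiff_add_card_inter, card_neighborFinset_eq_degree,
      hG.degree_eq]
  have hXY : X + Y = d * #C := by
    rw [← sum_add_distrib, sum_congr rfl fun u _ => hsplit u, sum_const, smul_eq_mul, mul_comm]
  have hX : X ≤ 2 * #L := sum_card_neighborFinset_inter_le_two_mul_card C hF
  have hLY : (d - 1) * #L ≤ Y :=
    calc (d - 1) * #L = ∑ _u ∈ L, (d - 1) := by rw [sum_const, smul_eq_mul, mul_comm]
      _ ≤ ∑ u ∈ L, #(G.neighborFinset u ∩ F) :=
          sum_le_sum fun u hu => by have := hsplit u; have := (mem_filter.mp hu).2; omega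
      _ ≤ Y := sum_le_sum_of_subset (filter_subset _ _)
  have hYF : Y ≤ d * #F :=
    calc Y = ∑ v ∈ F, #(G.neighborFinset v ∩ C) := sum_card_neighborFinset_inter_comm _ _
      _ ≤ ∑ _v ∈ F, d := sum_le_sum fun v _ =>
          (card_le_card inter_subset_left).trans (hG.degree_eq v).le
      _ = d * #F := by rw [sum_const, smul_eq_mul, mul_comm]
  rcases d with _ | e
  · simp
  simp only [add_tsub_cancel_right] at hLY ⊢
  -- `(e + 1) e #C = e (X + Y) ≤ 2 e #L + e Y ≤ (e + 2) Y ≤ (e + 2) (e + 1) #F`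
  nlinarith

theorem IsRegularOfDegree.sub_one_mul_card_le_two_mul_psi {d : ℕ} (hG : G.IsRegularOfDegree d)
    (hG₃ : G.CliqueFree 3) :
    (d - 1) * Fintype.card V ≤ 2 * d * psi G 4 := by
  obtain ⟨F, hF, hFcard⟩ := exists_isPathVertexCover_card_eq_psi G 4
  have h := hG.sub_one_mul_card_compl_le F fun u hu v hv huv =>
    hF.card_neighborFinset_inter_compl_le_one_or hG₃ hu hv huv
  rw [← hFcard, ← card_compl_add_card F]
  rcases d with _ | e
  · simp
  simp only [add_tsub_cancel_right] at h ⊢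
  nlinarith

end Counting

end SimpleGraph

theorem stmt_18_general {V : Type*} [Fintype V] [DecidableEq V] (G : SimpleGraph V)
    [DecidableRel G.Adj]
    (d : ℕ) (hreg : G.IsRegularOfDegree d)
    (A B : Finset V) (hpart : A ∪ B = Finset.univ) (hdisj : Disjoint A B)
    (hbip : ∀ u v, G.Adj u v → (u ∈ A ∧ v ∈ B) ∨ (u ∈ B ∧ v ∈ A))
    (A1 : Finset V) (hA1 : A1 ⊆ A)
    (hnbr : ∀ a ∈ A1, ∀ a' ∈ A1, a ≠ a' → ∀ b, G.Adj a b → ¬G.Adj a' b)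
    (hdom : ∀ v ∈ A \ A1, ∃ w, G.Adj v w ∧ ∃ a ∈ A1, G.Adj a w) :
    IsPathVertexCover G 4 (A \ A1) ∧
      2 * (d ^ 2 - d + 1) * (A \ A1).card ≤ (d ^ 2 - d) * Fintype.card V ∧
      (d ^ 2 - d + 1) * (A \ A1).card ≤ d ^ 2 * psi G 4 := by
  have hG : G.IsBipartiteWith A B := ⟨disjoint_coe.mpr hdisj, fun v w h => hbip v w h⟩
  have hAB : #A * d = #B * d := by simpa [hreg.degree_eq] using isBipartiteWith_sum_degrees_eq hG
  have hV : #A + #B = Fintype.card V := by rw [← card_union_of_disjoint hdisj, hpart, card_univ]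
  have hA : #(A \ A1) + #A1 = #A := card_sdiff_add_card_eq_card hA1
  have hcard_sdiff : #(A \ A1) ≤ d * (d - 1) * #A1 :=
    hreg.card_le_mul_card_of_forall_exists_adj_adj sdiff_disjoint hdom
  have hψ := hreg.sub_one_mul_card_le_two_mul_psi (hG.isBipartite.cliqueFree (by norm_num))
  refine ⟨hG.isPathVertexCover_four_sdiff hnbr, ?_⟩
  rcases d with _ | e
  · simp_all
  have hsq : (e + 1) ^ 2 - (e + 1) = (e + 1) * e := Nat.sub_eq_of_eq_add (by ring)
  simp only [hsq, add_tsub_cancel_right] at hcard_sdiff hψ ⊢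
  constructor <;> nlinarith

/-- Algorithm `Approx3` on `d`-regular bipartite graphs (`d ≥ 3`): if the
vertices of `A₁ ⊆ A` have pairwise disjoint neighborhoods and every vertex of
`A ∖ A₁` has a neighbor in `N(A₁)`, then `A ∖ A₁` is a `4`-path vertex cover
of `G` with `|A ∖ A₁| ≤ ((d²-d)/(2(d²-d+1)))·|V|` and
`|A ∖ A₁| ≤ (d²/(d²-d+1))·ψ₄(G)`. -/
theorem stmt_18 {V : Type*} [Fintype V] [DecidableEq V] (G : SimpleGraph V)
    [DecidableRel G.Adj]
    (d : ℕ) (hd : 3 ≤ d) (hreg : G.IsRegularOfDegree d)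
    (A B : Finset V) (hpart : A ∪ B = Finset.univ) (hdisj : Disjoint A B)
    (hbip : ∀ u v, G.Adj u v → (u ∈ A ∧ v ∈ B) ∨ (u ∈ B ∧ v ∈ A))
    (A1 : Finset V) (hA1 : A1 ⊆ A)
    (hnbr : ∀ a ∈ A1, ∀ a' ∈ A1, a ≠ a' → ∀ b, G.Adj a b → ¬G.Adj a' b)
    (hdom : ∀ v ∈ A \ A1, ∃ w, G.Adj v w ∧ ∃ a ∈ A1, G.Adj a w) :
    IsPathVertexCover G 4 (A \ A1) ∧
      2 * (d ^ 2 - d + 1) * (A \ A1).card ≤ (d ^ 2 - d) * Fintype.card V ∧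
      (d ^ 2 - d + 1) * (A \ A1).card ≤ d ^ 2 * psi G 4 :=
  stmt_18_general G d hreg A B hpart hdisj hbip A1 hA1 hnbr hdom
end

section
/- Let d ≥ 3 and let G = (V, E) be a d-regular finite simple bipartite graph with bipartition (A, B). Let A_1 ⊆ A be such that distinct vertices of A_1 have disjoint neighborhoods, and suppose that every vertex of A ∖ A_1 has at least one neighbor in N(A_1) = ⋃_{a ∈ A_1} N(a). Then (|A| − |A_1|)·(d − 1) ≥ (|B| − d·|A_1|)·d, and consequently |A_1| ≥ |A|/(d² − d + 1). -/
open SimpleGraph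

/-!
Write `N₁ = N(A₁)`; it has `d·|A₁|` elements because the neighbourhoods are disjoint.
Every vertex of `B ∖ N₁` sends all `d` of its edges into `A ∖ A₁`, while every vertex of
`A ∖ A₁` sends one of its `d` edges into `N₁`, hence at most `d - 1` into `B ∖ N₁`.
Double counting the edges between `B ∖ N₁` and `A ∖ A₁` gives the first inequality, and
the second follows from it because `|A| = |B|` in a regular bipartite graph.
-/

open Finset

namespace SimpleGraph.IsRegularOfDegree

variable {V : Type*} {G : SimpleGraph V} [G.LocallyFinite] {d : ℕ}

theorem card_eq_card_of_isBipartiteWith (hreg : G.IsRegularOfDegree d) (hd : 0 < d)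
    {s t : Finset V} (hst : G.IsBipartiteWith ↑s ↑t) : #s = #t := by
  have hsum := isBipartiteWith_sum_degrees_eq hst
  simp only [hreg.degree_eq, sum_const, smul_eq_mul] at hsum
  exact Nat.eq_of_mul_eq_mul_right hd hsum

variable [DecidableEq V]

theorem card_biUnion_neighborFinset (hreg : G.IsRegularOfDegree d) {s : Finset V}
    (hs : (s : Set V).PairwiseDisjoint fun v => G.neighborFinset v) :
    #(s.biUnion fun v => G.neighborFinset v) = d * #s := by
  simp only [card_biUnion hs, card_neighborFinset_eq_degree, hreg.degree_eq, sum_const,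
    smul_eq_mul, mul_comm]

theorem card_sdiff_biUnion_neighborFinset_mul_le [DecidableRel G.Adj]
    (hreg : G.IsRegularOfDegree d)
    {A B A₁ : Finset V} (hAB : G.IsBipartiteWith ↑A ↑B)
    (hdom : ∀ v ∈ A \ A₁, ∃ w, G.Adj v w ∧ ∃ a ∈ A₁, G.Adj a w) :
    #(B \ A₁.biUnion fun v => G.neighborFinset v) * d ≤ #(A \ A₁) * (d - 1) := by
  refine card_mul_le_card_mul' G.Adj (fun b hb => ?_) (fun a ha => ?_)
  · obtain ⟨hbB, hbN⟩ := mem_sdiff.1 hb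
    have hsub : G.neighborFinset b ⊆ (A \ A₁).bipartiteBelow G.Adj b := fun a hab => by
      have hab : G.Adj a b := ((mem_neighborFinset _ _ _).1 hab).symm
      have haA₁ : a ∉ A₁ := fun haA₁ =>
        hbN (mem_biUnion.2 ⟨a, haA₁, (mem_neighborFinset _ _ _).2 hab⟩)
      exact (mem_bipartiteBelow _).2 ⟨mem_sdiff.2 ⟨hAB.mem_of_mem_adj' hbB hab, haA₁⟩, hab⟩
    simpa only [card_neighborFinset_eq_degree, hreg.degree_eq] using card_le_card hsub
  · obtain ⟨w, haw, a₁, ha₁, ha₁w⟩ := hdom a ha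
    have hsub : (B \ A₁.biUnion fun v => G.neighborFinset v).bipartiteAbove G.Adj a ⊆
        (G.neighborFinset a).erase w := fun b hb => by
      obtain ⟨hbS, hab⟩ := (mem_bipartiteAbove _).1 hb
      refine mem_erase.2 ⟨?_, (mem_neighborFinset _ _ _).2 hab⟩
      rintro rfl
      exact (mem_sdiff.1 hbS).2 (mem_biUnion.2 ⟨a₁, ha₁, (mem_neighborFinset _ _ _).2 ha₁w⟩)
    calc _ ≤ #((G.neighborFinset a).erase w) := card_le_card hsub
      _ = d - 1 := by
        rw [card_erase_of_mem ((mem_neighborFinset _ _ _).2 haw), card_neighborFinset_eq_degree,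
          hreg.degree_eq]

end SimpleGraph.IsRegularOfDegree

theorem stmt_19_general {V : Type*} [Fintype V] [DecidableEq V] (G : SimpleGraph V)
    [DecidableRel G.Adj]
    (d : ℕ) (hd : 3 ≤ d) (hreg : G.IsRegularOfDegree d)
    (A B : Finset V) (hdisj : Disjoint A B)
    (hbip : ∀ u v, G.Adj u v → (u ∈ A ∧ v ∈ B) ∨ (u ∈ B ∧ v ∈ A))
    (A1 : Finset V) (hA1 : A1 ⊆ A)
    (hnbr : ∀ a ∈ A1, ∀ a' ∈ A1, a ≠ a' → ∀ b, G.Adj a b → ¬G.Adj a' b)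
    (hdom : ∀ v ∈ A \ A1, ∃ w, G.Adj v w ∧ ∃ a ∈ A1, G.Adj a w) :
    ((B.card : ℤ) - d * A1.card) * d ≤ ((A.card : ℤ) - A1.card) * (d - 1) ∧
      A.card ≤ (d ^ 2 - d + 1) * A1.card := by
  have hAB : G.IsBipartiteWith ↑A ↑B := ⟨disjoint_coe.2 hdisj, hbip⟩
  have hA1disj : (A1 : Set V).PairwiseDisjoint fun v => G.neighborFinset v :=
    fun a ha a' ha' hne => disjoint_left.2 fun b hab ha'b => hnbr a ha a' ha' hne b
      ((mem_neighborFinset _ _ _).1 hab) ((mem_neighborFinset _ _ _).1 ha'b)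
  have hN1B : (A1.biUnion fun v => G.neighborFinset v) ⊆ B := biUnion_subset.2 fun a ha _ hab =>
    hAB.mem_of_mem_adj (hA1 ha) ((mem_neighborFinset _ _ _).1 hab)
  have hcount := hreg.card_sdiff_biUnion_neighborFinset_mul_le hAB hdom
  rw [card_sdiff_of_subset hN1B, card_sdiff_of_subset hA1,
    hreg.card_biUnion_neighborFinset hA1disj] at hcount
  have hfirst : ((B.card : ℤ) - d * A1.card) * d ≤ ((A.card : ℤ) - A1.card) * (d - 1) := by
    have hN1le := hreg.card_biUnion_neighborFinset hA1disj ▸ card_le_card hN1B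
    zify [hN1le, card_le_card hA1, (by omega : 1 ≤ d)] at hcount
    exact hcount
  refine ⟨hfirst, ?_⟩
  have hcard := hreg.card_eq_card_of_isBipartiteWith (by omega) hAB
  zify [Nat.le_self_pow two_ne_zero d]
  rw [← hcard] at hfirst
  linarith

/-- Counting step for `Approx3` on `d`-regular bipartite graphs (`d ≥ 3`):
under the same hypotheses as before,
`(|A| - |A₁|)·(d - 1) ≥ (|B| - d·|A₁|)·d`, and consequently
`|A₁| ≥ |A|/(d² - d + 1)`. -/
theorem stmt_19 {V : Type*} [Fintype V] [DecidableEq V] (G : SimpleGraph V)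
    [DecidableRel G.Adj]
    (d : ℕ) (hd : 3 ≤ d) (hreg : G.IsRegularOfDegree d)
    (A B : Finset V) (hpart : A ∪ B = Finset.univ) (hdisj : Disjoint A B)
    (hbip : ∀ u v, G.Adj u v → (u ∈ A ∧ v ∈ B) ∨ (u ∈ B ∧ v ∈ A))
    (A1 : Finset V) (hA1 : A1 ⊆ A)
    (hnbr : ∀ a ∈ A1, ∀ a' ∈ A1, a ≠ a' → ∀ b, G.Adj a b → ¬G.Adj a' b)
    (hdom : ∀ v ∈ A \ A1, ∃ w, G.Adj v w ∧ ∃ a ∈ A1, G.Adj a w) :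
    ((B.card : ℤ) - d * A1.card) * d ≤ ((A.card : ℤ) - A1.card) * (d - 1) ∧
      A.card ≤ (d ^ 2 - d + 1) * A1.card :=
  stmt_19_general G d hd hreg A B hdisj hbip A1 hA1 hnbr hdom
end
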